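/- arXiv:2505.11600 — 3 statements merged into one kernel-verified Lean document; each statement's English description precedes it below -/
import Mathlib

section
/- Let u : B → ℝ be a continuous function on the open unit ball B ⊆ ℝⁿ. If the sets {x ∈ B : u(x) > 0} and {x ∈ B : u(x) < 0} are both nonempty, then the zero set {x ∈ B : u(x) = 0} has positive (n−1)-dimensional Hausdorff measure; in particular its Hausdorff dimension is at least n−1. -/
/-!
Pick `a`, `b` with `u a > 0 > u b` and let `P` be the orthogonal projection onto the hyperplane
`W = (b - a)ᗮ`. For `w ∈ W` small, `u` still changes sign along the translated segment
`[a + w, b + w]`, so it vanishes somewhere on it, and `P` maps that whole segment to `P a + w`.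
Hence the projection of the zero set contains a neighbourhood of `P a` in `W`, which has positive
`(n - 1)`-dimensional Hausdorff measure; projections do not increase Hausdorff measure.
-/

open MeasureTheory Metric Filter Topology Module

section ZeroSet

variable {E : Type*} [NormedAddCommGroup E] [InnerProductSpace ℝ E]

theorem orthogonalProjectionOnto_image_zeroSet_mem_nhds [CompleteSpace E] {U : Set E} {u : E → ℝ}
    (hU : IsOpen U) (hUc : Convex ℝ U) (hu : ContinuousOn u U) {a b : E} (ha : a ∈ U)
    (hb : b ∈ U) (hua : 0 < u a) (hub : u b < 0) :
    (ℝ ∙ (b - a))ᗮ.orthogonalProjectionOnto '' {x ∈ U | u x = 0} ∈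
      𝓝 ((ℝ ∙ (b - a))ᗮ.orthogonalProjectionOnto a) := by
  set W := (ℝ ∙ (b - a))ᗮ
  set P := W.orthogonalProjectionOnto
  have eventually_shift {c : E} (hc : c ∈ U) (p : ℝ → Prop) (hp : ∀ᶠ t in 𝓝 (u c), p t) :
      ∀ᶠ w in 𝓝 (0 : E), c + w ∈ U ∧ p (u (c + w)) := by
    have hshift : Tendsto (c + ·) (𝓝 0) (𝓝 c) := by
      simpa using (continuous_const_add c).tendsto 0
    exact hshift.eventually ((hU.eventually_mem hc).and
      ((hu.continuousAt (hU.mem_nhds hc)).eventually hp))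
  have hsign :=
    (eventually_shift ha _ (lt_mem_nhds hua)).and (eventually_shift hb _ (gt_mem_nhds hub))
  have hoffset : Tendsto (fun y : W => (y : E) - P a) (𝓝 (P a)) (𝓝 0) :=
    tendsto_sub_nhds_zero_iff.mpr continuous_subtype_val.continuousAt
  filter_upwards [hoffset.eventually hsign] with y ⟨⟨haU, hapos⟩, ⟨hbU, hbneg⟩⟩
  set w := (y : E) - P a
  obtain ⟨z, hz, hz0⟩ : ∃ z ∈ segment ℝ (a + w) (b + w), u z = 0 :=
    (convex_segment _ _).isPreconnected.intermediate_value (right_mem_segment _ _ _)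
      (left_mem_segment _ _ _) (hu.mono (hUc.segment_subset haU hbU)) ⟨hbneg.le, hapos.le⟩
  refine ⟨z, ⟨hUc.segment_subset haU hbU hz, hz0⟩, ?_⟩
  have hPa : P (a + w) = y := by
    simp only [w, map_add, map_sub, P, Submodule.orthogonalProjectionOnto_mem_subspace_eq_self]
    abel
  have hPb : P (b + w) = y := by
    have hPba : P (b - a) = 0 := W.orthogonalProjectionOnto_apply_of_mem_orthogonal
      ((ℝ ∙ (b - a)).le_orthogonal_orthogonal (Submodule.mem_span_singleton_self _))
    rw [← hPa, show b + w = (b - a) + (a + w) by abel, map_add, hPba, zero_add]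
  have hPz := Set.mem_image_of_mem (P : E →ₗ[ℝ] W).toAffineMap hz
  rwa [image_segment, LinearMap.coe_toAffineMap, ContinuousLinearMap.coe_coe, hPa, hPb,
    segment_same, Set.mem_singleton_iff] at hPz

theorem hausdorffMeasure_zeroSet_pos [FiniteDimensional ℝ E] [MeasurableSpace E] [BorelSpace E]
    {U : Set E} {u : E → ℝ} (hU : IsOpen U) (hUc : Convex ℝ U) (hu : ContinuousOn u U)
    {a b : E} (ha : a ∈ U) (hb : b ∈ U) (hua : 0 < u a) (hub : u b < 0) :
    0 < μH[(finrank ℝ E : ℝ) - 1] {x ∈ U | u x = 0} := by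
  set W := (ℝ ∙ (b - a))ᗮ
  have hba : b - a ≠ 0 := sub_ne_zero.mpr fun h => (hub.trans hua).ne (by rw [h])
  have hdim : (finrank ℝ E : ℝ) - 1 = finrank ℝ W := by
    have := (ℝ ∙ (b - a)).finrank_add_finrank_orthogonal
    rw [finrank_span_singleton hba] at this
    rw [← this]
    push_cast
    ring
  rw [hdim]
  calc 0 < μH[finrank ℝ W] (W.orthogonalProjectionOnto '' {x ∈ U | u x = 0}) :=
        Measure.measure_pos_of_mem_nhds _
          (orthogonalProjectionOnto_image_zeroSet_mem_nhds hU hUc hu ha hb hua hub)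
    _ ≤ μH[finrank ℝ W] {x ∈ U | u x = 0} :=
        hausdorffMeasure_orthogonalProjectionOnto_le W _ _ (Nat.cast_nonneg _)

end ZeroSet

theorem ofReal_le_dimH_of_hausdorffMeasure_ne_zero {X : Type*} [EMetricSpace X]
    [MeasurableSpace X] [BorelSpace X] {s : Set X} {d : ℝ} (h : μH[d] s ≠ 0) :
    ENNReal.ofReal d ≤ dimH s := by
  rcases le_or_gt d 0 with hd | hd
  · simp [ENNReal.ofReal_of_nonpos hd]
  · exact le_dimH_of_hausdorffMeasure_ne_zero (by rwa [Real.coe_toNNReal d hd.le])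

/-- If a continuous function on the open unit ball of ℝⁿ takes both positive
and negative values, then its zero set has positive (n−1)-dimensional Hausdorff measure,
and in particular Hausdorff dimension at least n−1. -/
theorem stmt0 (n : ℕ) (u : EuclideanSpace ℝ (Fin n) → ℝ)
    (hu : ContinuousOn u (ball (0 : EuclideanSpace ℝ (Fin n)) 1))
    (hpos : ∃ x ∈ ball (0 : EuclideanSpace ℝ (Fin n)) 1, 0 < u x)
    (hneg : ∃ x ∈ ball (0 : EuclideanSpace ℝ (Fin n)) 1, u x < 0) :
    0 < μH[(n : ℝ) - 1] {x | x ∈ ball (0 : EuclideanSpace ℝ (Fin n)) 1 ∧ u x = 0} ∧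
      ENNReal.ofReal ((n : ℝ) - 1) ≤
        dimH {x | x ∈ ball (0 : EuclideanSpace ℝ (Fin n)) 1 ∧ u x = 0} := by
  obtain ⟨a, ha, hua⟩ := hpos
  obtain ⟨b, hb, hub⟩ := hneg
  have hZ := hausdorffMeasure_zeroSet_pos isOpen_ball (convex_ball _ _) hu ha hb hua hub
  rw [finrank_euclideanSpace_fin] at hZ
  exact ⟨hZ, ofReal_le_dimH_of_hausdorffMeasure_ne_zero hZ.ne'⟩
end

section
/- Let U ⊆ ℝⁿ be a connected open set and S ⊆ U a subset that is closed in U. If the (n−1)-dimensional Hausdorff measure of S is zero, then U \ S is path connected. -/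
/-!
Fix a ball in `U` and two points `a`, `b` of the ball outside `S`. The points `z` for which the
segment `[a, z]` meets `S` lie in the cone over `S` with apex `a`. Cutting `S` into pieces of
small diameters `δᵢ`, the part of the cone over the `i`-th piece is covered by about `1 / δᵢ`
balls of radius comparable to `δᵢ`, so the cone has `n`-dimensional measure at most a constant
times `∑ δᵢ ^ (n - 1)`, which can be made arbitrarily small. Hence some `z` in the ball lies
outside the cones of both `a` and `b`, and `a → z → b` is a polygonal path avoiding `S`. Since
`S` is also `n`-dimensionally null, it has empty interior, and the connectedness of `U` glues
these local paths together.
-/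

open MeasureTheory Metric Set Module AffineMap
open scoped ENNReal Set.Notation Topology

theorem IsConnected.isPathConnected_of_locally_joinedIn {X : Type*} [TopologicalSpace X]
    {U V : Set X} (hU : IsConnected U) (hVU : V ⊆ U) (hUV : U ⊆ closure V)
    (hloc : ∀ x ∈ U, ∃ N ∈ 𝓝 x, ∀ a ∈ N ∩ V, ∀ b ∈ N ∩ V, JoinedIn V a b) :
    IsPathConnected V := by
  let P x y := ∃ N₁ ∈ 𝓝 x, ∃ N₂ ∈ 𝓝 y, ∀ a ∈ N₁ ∩ V, ∀ b ∈ N₂ ∩ V, JoinedIn V a b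
  have hP : ∀ x ∈ U, ∀ y ∈ U, P x y := by
    intro x hx y hy
    refine hU.isPreconnected.induction₂ P (fun x hx => ?_) ?_ ?_ hx hy
    · obtain ⟨N, hN, hNV⟩ := hloc x hx
      filter_upwards [nhdsWithin_le_nhds (eventually_mem_nhds_iff.2 hN)] with y hy
      exact ⟨N, hN, N, hy, hNV⟩
    · rintro x y z - hy - ⟨N₁, hN₁, N₂, hN₂, h⟩ ⟨N₃, hN₃, N₄, hN₄, h'⟩
      obtain ⟨b, hb, hbV⟩ := mem_closure_iff_nhds.1 (hUV hy) _ (Filter.inter_mem hN₂ hN₃)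
      exact ⟨N₁, hN₁, N₄, hN₄, fun a ha c hc =>
        (h a ha b ⟨hb.1, hbV⟩).trans (h' b ⟨hb.2, hbV⟩ c hc)⟩
    · rintro x y - - ⟨N₁, hN₁, N₂, hN₂, h⟩
      exact ⟨N₂, hN₂, N₁, hN₁, fun a ha b hb => (h b hb a ha).symm⟩
  obtain ⟨x, hx⟩ := hU.nonempty
  refine isPathConnected_iff.2 ⟨closure_nonempty_iff.1 ⟨x, hUV hx⟩, fun a ha b hb => ?_⟩
  obtain ⟨N₁, hN₁, N₂, hN₂, h⟩ := hP a (hVU ha) b (hVU hb)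
  exact h a ⟨mem_of_mem_nhds hN₁, ha⟩ b ⟨mem_of_mem_nhds hN₂, hb⟩

lemma isClosed_inter_of_isClosed_preimage_val {X : Type*} [TopologicalSpace X] {U S K : Set X}
    (hS : IsClosed (U ↓∩ S)) (hK : IsClosed K) (hKU : K ⊆ U) : IsClosed (S ∩ K) := by
  refine closure_subset_iff_isClosed.1 fun x hx => ?_
  have hxK : x ∈ K := hK.closure_subset (closure_mono inter_subset_right hx)
  have hxUS : x ∈ closure (U ∩ S) :=
    closure_mono (subset_inter (inter_subset_right.trans hKU) inter_subset_left) hx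
  exact ⟨isClosed_preimage_val.1 hS ⟨hKU hxK, hxUS⟩, hxK⟩

lemma eq_empty_of_hausdorffMeasure_eq_zero_of_nonpos {X : Type*} [EMetricSpace X]
    [MeasurableSpace X] [BorelSpace X] {d : ℝ} {s : Set X} (hd : d ≤ 0) (hs : μH[d] s = 0) : s = ∅ := by
  by_contra h
  have := (Measure.one_le_hausdorffMeasure_zero_of_nonempty (nonempty_iff_ne_empty.2 h)).trans
    (Measure.hausdorffMeasure_mono hd s)
  simp [hs] at this

lemma exists_cover_of_hausdorffMeasure_eq_zero {X : Type*} [EMetricSpace X] [MeasurableSpace X]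
    [BorelSpace X] {d : ℝ} {s : Set X} (hs : μH[d] s = 0) {r ε : ℝ≥0∞} (hr : 0 < r)
    (hε : 0 < ε) :
    ∃ t : ℕ → Set X, s ⊆ ⋃ i, t i ∧ (∀ i, ediam (t i) ≤ r) ∧
      ∑' i, ⨆ _ : (t i).Nonempty, ediam (t i) ^ d < ε := by
  have h : ⨅ (t : ℕ → Set X) (_ : s ⊆ ⋃ i, t i) (_ : ∀ i, ediam (t i) ≤ r),
      ∑' i, ⨆ _ : (t i).Nonempty, ediam (t i) ^ d < ε := by
    refine lt_of_le_of_lt ?_ hε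
    rw [← hs, Measure.hausdorffMeasure_apply]
    exact le_iSup₂_of_le r hr le_rfl
  simpa only [iInf_lt_iff, exists_prop] using h

section NormedSpace

variable {E : Type*} [NormedAddCommGroup E] [NormedSpace ℝ E]

def radialCone (a : E) (T : Set E) (M : ℝ) : Set E :=
  ⋃ s ∈ T, lineMap a s '' Icc 1 M

lemma radialCone_mono {a : E} {T T' : Set E} {M M' : ℝ} (hT : T ⊆ T') (hM : M ≤ M') :
    radialCone a T M ⊆ radialCone a T' M' :=
  biUnion_mono hT fun _ _ => image_mono (Icc_subset_Icc_right hM)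

lemma radialCone_iUnion {ι : Sort*} (a : E) (u : ι → Set E) (M : ℝ) :
    radialCone a (⋃ i, u i) M = ⋃ i, radialCone a (u i) M :=
  biUnion_iUnion u _

lemma mem_radialCone_of_mem_segment {a s z : E} {T : Set E} {M : ℝ} (hsT : s ∈ T)
    (hs : s ∈ segment ℝ a z) (hsa : s ≠ a) (hz : dist a z ≤ M * dist a s) :
    z ∈ radialCone a T M := by
  rw [segment_eq_image_lineMap] at hs
  obtain ⟨v, ⟨hv0, hv1⟩, rfl⟩ := hs
  have hv : 0 < v := hv0.lt_of_ne (by rintro rfl; simp at hsa)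
  have haz : 0 < dist a z := dist_pos.2 (by rintro rfl; simp at hsa)
  rw [dist_left_lineMap, Real.norm_of_nonneg hv0] at hz
  refine mem_biUnion hsT ⟨v⁻¹, ⟨(one_le_inv₀ hv).2 hv1, ?_⟩, ?_⟩
  · rw [inv_le_iff_one_le_mul₀ hv]
    nlinarith
  · rw [lineMap_lineMap_right, inv_mul_cancel₀ hv.ne', lineMap_apply_one]

lemma dist_lineMap_lineMap_le (a s s₀ : E) {t τ : ℝ} (ht : 0 ≤ t) :
    dist (lineMap a s t) (lineMap a s₀ τ) ≤ t * dist s s₀ + |t - τ| * dist a s₀ := by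
  calc dist (lineMap a s t) (lineMap a s₀ τ)
      ≤ dist (lineMap a s t) (lineMap a s₀ t) + dist (lineMap a s₀ t) (lineMap a s₀ τ) :=
        dist_triangle _ _ _
    _ = t * dist s s₀ + |t - τ| * dist a s₀ := by
        rw [dist_lineMap_lineMap, Real.dist_eq, dist_eq_norm, dist_eq_norm s,
          lineMap_apply_module', lineMap_apply_module',
          show t • (s - a) + a - (t • (s₀ - a) + a) = t • (s - s₀) by module, norm_smul,
          Real.norm_of_nonneg ht]

lemma radialCone_subset_biUnion_closedBall {a s₀ : E} {u : Set E} {M R δ : ℝ} (hδ : 0 < δ)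
    (hs₀ : dist a s₀ ≤ R) (hu : ∀ s ∈ u, dist s s₀ ≤ δ) :
    radialCone a u M ⊆ ⋃ j ∈ Finset.range (⌊(M - 1) / δ⌋₊ + 1),
      closedBall (lineMap a s₀ (1 + j * δ)) ((M + R) * δ) := by
  intro z hz
  obtain ⟨s, hs, t, ⟨ht1, htM⟩, rfl⟩ := mem_iUnion₂.1 hz
  set j := ⌊(t - 1) / δ⌋₊
  have hj : j * δ ≤ t - 1 ∧ t - 1 < (j + 1) * δ := by
    constructor
    · exact (le_div_iff₀ hδ).1 (Nat.floor_le (div_nonneg (by linarith) hδ.le))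
    · exact (div_lt_iff₀ hδ).1 (Nat.lt_floor_add_one _)
  refine mem_biUnion (x := j) (Finset.mem_range.2 (Nat.lt_succ_of_le ?_)) (mem_closedBall.2 ?_)
  · exact Nat.floor_le_floor (by gcongr)
  calc dist (lineMap a s t) (lineMap a s₀ (1 + j * δ))
      ≤ t * dist s s₀ + |t - (1 + j * δ)| * dist a s₀ :=
        dist_lineMap_lineMap_le a s s₀ (by linarith)
    _ ≤ M * δ + δ * R := by
        gcongr
        · linarith
        · exact hu s hs
        · rw [abs_le]; constructor <;> linarith
    _ = (M + R) * δ := by ring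

lemma disjoint_segment_of_notMem_radialCone {x z : E} {T : Set E} {L : ℝ} (hT : IsClosed T)
    (hx : x ∉ T) (hz : dist x z ≤ L) (hzT : z ∉ radialCone x T (L / infDist x T)) :
    Disjoint (segment ℝ x z) T := by
  refine Set.disjoint_left.2 fun y hy hyT => hzT (mem_radialCone_of_mem_segment hyT hy
    (by rintro rfl; exact hx hyT) ?_)
  have hρ : 0 < infDist x T := (hT.notMem_iff_infDist_pos ⟨y, hyT⟩).1 hx
  calc dist x z ≤ L := hz
    _ = L / infDist x T * infDist x T := (div_mul_cancel₀ _ hρ.ne').symm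
    _ ≤ L / infDist x T * dist x y := by
        gcongr
        · exact div_nonneg (dist_nonneg.trans hz) hρ.le
        · exact infDist_le_dist_of_mem hyT

variable [FiniteDimensional ℝ E] [MeasurableSpace E] [BorelSpace E] (μ : Measure E)
  [μ.IsAddHaarMeasure]

lemma addHaar_radialCone_le_of_forall_dist_le {a s₀ : E} {u : Set E} {M R δ : ℝ} (hM : 1 ≤ M)
    (hδ : 0 < δ) (hδ1 : δ ≤ 1) (hs₀ : dist a s₀ ≤ R) (hu : ∀ s ∈ u, dist s s₀ ≤ δ) :
    μ (radialCone a u M) ≤ ENNReal.ofReal (M * (M + R) ^ finrank ℝ E *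
      δ ^ ((finrank ℝ E : ℝ) - 1)) * μ (closedBall 0 1) := by
  set d := finrank ℝ E
  set N := ⌊(M - 1) / δ⌋₊
  have hMR : 0 ≤ M + R := by linarith [dist_nonneg.trans hs₀]
  have hN : ((N : ℝ) + 1) * δ ≤ M := by
    have := Nat.floor_le (div_nonneg (sub_nonneg.2 hM) hδ.le)
    rw [le_div_iff₀ hδ] at this
    nlinarith
  have hpow : δ ^ d = δ ^ ((d : ℝ) - 1) * δ := by
    rw [Real.rpow_sub_one hδ.ne', Real.rpow_natCast, div_mul_cancel₀ _ hδ.ne']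
  calc μ (radialCone a u M)
      ≤ ∑ j ∈ Finset.range (N + 1), μ (closedBall (lineMap a s₀ (1 + j * δ)) ((M + R) * δ)) :=
        (measure_mono (radialCone_subset_biUnion_closedBall hδ hs₀ hu)).trans
          (measure_biUnion_finset_le _ _)
    _ = ENNReal.ofReal ((N + 1) * ((M + R) * δ) ^ d) * μ (closedBall 0 1) := by
        rw [ENNReal.ofReal_mul (by positivity), mul_assoc]
        simp only [Measure.addHaar_closedBall' μ _ (by positivity : 0 ≤ (M + R) * δ),
          Finset.sum_const, Finset.card_range, nsmul_eq_mul]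
        norm_cast
    _ ≤ ENNReal.ofReal (M * (M + R) ^ d * δ ^ ((d : ℝ) - 1)) * μ (closedBall 0 1) := by
        gcongr ENNReal.ofReal ?_ * _
        calc ((N : ℝ) + 1) * ((M + R) * δ) ^ d
            = ((N + 1) * δ) * ((M + R) ^ d * δ ^ ((d : ℝ) - 1)) := by rw [mul_pow, hpow]; ring
          _ ≤ M * ((M + R) ^ d * δ ^ ((d : ℝ) - 1)) := by gcongr
          _ = M * (M + R) ^ d * δ ^ ((d : ℝ) - 1) := by ring

lemma addHaar_radialCone_singleton (hd : 1 < finrank ℝ E) (a s : E) (M : ℝ) :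
    μ (radialCone a {s} M) = 0 := by
  refine measure_mono_null ?_ (Measure.addHaar_affineSubspace μ line[ℝ, a, s] fun h => ?_)
  · simp only [radialCone, mem_singleton_iff, iUnion_iUnion_eq_left]
    rintro _ ⟨t, -, rfl⟩
    exact lineMap_mem_affineSpan_pair t a s
  · have := (collinear_pair ℝ a s).finrank_le_one
    rw [← direction_affineSpan, h, AffineSubspace.direction_top, finrank_top] at this
    omega

lemma addHaar_radialCone_le (hd : 1 < finrank ℝ E) {a : E} {u : Set E} {M R : ℝ} (hM : 1 ≤ M)
    (hu : u ⊆ closedBall a R) (hu1 : ediam u ≤ 1) :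
    μ (radialCone a u M) ≤ ENNReal.ofReal (M * (M + R) ^ finrank ℝ E) * μ (closedBall 0 1) *
      ediam u ^ ((finrank ℝ E : ℝ) - 1) := by
  rcases u.eq_empty_or_nonempty with rfl | ⟨s₀, hs₀⟩
  · simp [radialCone]
  rcases eq_or_ne (ediam u) 0 with h0 | h0
  · rw [(ediam_eq_zero_iff.1 h0).eq_singleton_of_mem hs₀, addHaar_radialCone_singleton μ hd]
    exact zero_le
  have hfin : ediam u ≠ ⊤ := ne_top_of_le_ne_top ENNReal.one_ne_top hu1
  set δ := (ediam u).toReal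
  have hδ : 0 < δ := ENNReal.toReal_pos h0 hfin
  have hd1 : (0 : ℝ) ≤ finrank ℝ E - 1 := by
    have : (1 : ℝ) < finrank ℝ E := by exact_mod_cast hd
    linarith
  have hR : 0 ≤ R := dist_nonneg.trans (mem_closedBall.1 (hu hs₀))
  calc μ (radialCone a u M)
      ≤ ENNReal.ofReal (M * (M + R) ^ finrank ℝ E * δ ^ ((finrank ℝ E : ℝ) - 1)) *
          μ (closedBall 0 1) := by
        refine addHaar_radialCone_le_of_forall_dist_le μ hM hδ ?_
          (by simpa [dist_comm] using hu hs₀) fun s hs => ?_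
        · exact ENNReal.toReal_le_of_le_ofReal zero_le_one (by simpa using hu1)
        rw [dist_edist]
        exact ENNReal.toReal_mono hfin (edist_le_ediam_of_mem hs hs₀)
    _ = _ := by
        rw [← ENNReal.ofReal_toReal hfin, ENNReal.ofReal_rpow_of_nonneg hδ.le hd1,
          ENNReal.ofReal_mul (by positivity)]
        ring

lemma addHaar_radialCone_eq_zero (hd : 1 < finrank ℝ E) {a : E} {T : Set E} {M R : ℝ}
    (hT : T ⊆ closedBall a R) (hT0 : μH[(finrank ℝ E : ℝ) - 1] T = 0) :
    μ (radialCone a T M) = 0 := by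
  set M' := max 1 M
  set K := ENNReal.ofReal (M' * (M' + R) ^ finrank ℝ E) * μ (closedBall 0 1)
  have hK : K ≠ ⊤ := ENNReal.mul_ne_top ENNReal.ofReal_ne_top measure_closedBall_lt_top.ne
  refine eq_of_le_of_forall_lt_imp_le_of_dense bot_le fun ε hε => ?_
  obtain ⟨t, hTt, ht1, htε⟩ := exists_cover_of_hausdorffMeasure_eq_zero hT0 one_pos
    (ENNReal.div_pos hε.ne' hK)
  have hcover : radialCone a T M ⊆ ⋃ i, radialCone a (t i ∩ T) M' := by
    rw [← radialCone_iUnion, ← iUnion_inter]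
    exact radialCone_mono (subset_inter hTt subset_rfl) (le_max_right 1 M)
  have hpiece : ∀ i, μ (radialCone a (t i ∩ T) M') ≤
      K * ⨆ _ : (t i).Nonempty, ediam (t i) ^ ((finrank ℝ E : ℝ) - 1) := by
    intro i
    rcases (t i).eq_empty_or_nonempty with h | h
    · simp [h, radialCone]
    rw [iSup_pos h]
    have hd1 : (0 : ℝ) ≤ finrank ℝ E - 1 := by
      have : (1 : ℝ) < finrank ℝ E := by exact_mod_cast hd
      linarith
    calc μ (radialCone a (t i ∩ T) M') ≤ K * ediam (t i ∩ T) ^ ((finrank ℝ E : ℝ) - 1) :=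
          addHaar_radialCone_le μ hd (le_max_left 1 M) (inter_subset_right.trans hT)
            ((ediam_mono inter_subset_left).trans (ht1 i))
      _ ≤ K * ediam (t i) ^ ((finrank ℝ E : ℝ) - 1) := by
          gcongr
          exact inter_subset_left
  calc μ (radialCone a T M) ≤ ∑' i, μ (radialCone a (t i ∩ T) M') :=
        (measure_mono hcover).trans (measure_iUnion_le _)
    _ ≤ ∑' i, K * ⨆ _ : (t i).Nonempty, ediam (t i) ^ ((finrank ℝ E : ℝ) - 1) :=
        ENNReal.tsum_le_tsum hpiece
    _ = K * ∑' i, ⨆ _ : (t i).Nonempty, ediam (t i) ^ ((finrank ℝ E : ℝ) - 1) :=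
        ENNReal.tsum_mul_left
    _ ≤ K * (ε / K) := by gcongr
    _ ≤ ε := ENNReal.mul_div_le

lemma joinedIn_ball_diff (hd : 1 < finrank ℝ E) {S : Set E} {c : E} {r : ℝ}
    (hS : IsClosed (S ∩ closedBall c r)) (hS0 : μH[(finrank ℝ E : ℝ) - 1] S = 0) {a b : E}
    (ha : a ∈ ball c r \ S) (hb : b ∈ ball c r \ S) : JoinedIn (ball c r \ S) a b := by
  set T := S ∩ closedBall c r
  have hT0 : μH[(finrank ℝ E : ℝ) - 1] T = 0 := measure_mono_null inter_subset_left hS0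
  let bad x := radialCone x T (2 * r / infDist x T)
  have hT : ∀ x ∈ ball c r, T ⊆ closedBall x (2 * r) := fun x hx s hs => by
    rw [mem_closedBall, dist_comm]
    linarith [dist_triangle_right x s c, mem_ball.1 hx, mem_closedBall.1 hs.2]
  have hbad : μH[(finrank ℝ E : ℝ)] (bad a ∪ bad b) = 0 :=
    measure_union_null (addHaar_radialCone_eq_zero _ hd (hT a ha.1) hT0)
      (addHaar_radialCone_eq_zero _ hd (hT b hb.1) hT0)
  obtain ⟨z, hz, hzbad⟩ : (ball c r ∩ (bad a ∪ bad b)ᶜ).Nonempty :=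
    (interior_eq_empty_iff_dense_compl.1 (Measure.interior_eq_empty_of_null hbad))
      |>.inter_open_nonempty _ isOpen_ball (nonempty_ball.2 (pos_of_mem_ball ha.1))
  have hjoin : ∀ x ∈ ball c r \ S, z ∉ bad x → JoinedIn (ball c r \ S) x z := by
    intro x hx hzx
    have hdisj := disjoint_segment_of_notMem_radialCone hS (fun h => hx.2 h.1)
      (by linarith [dist_triangle x c z, mem_ball.1 hx.1, mem_ball'.1 hz]) hzx
    refine JoinedIn.of_segment_subset fun y hy => ?_
    have hyB : y ∈ ball c r := (convex_ball c r).segment_subset hx.1 hz hy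
    exact ⟨hyB, fun hyS => Set.disjoint_left.1 hdisj hy ⟨hyS, ball_subset_closedBall hyB⟩⟩
  exact (hjoin a ha fun h => hzbad (Or.inl h)).trans (hjoin b hb fun h => hzbad (Or.inr h)).symm

theorem IsConnected.isPathConnected_diff_of_hausdorffMeasure_eq_zero {U S : Set E}
    (hUc : IsConnected U) (hU : IsOpen U) (hS : IsClosed (U ↓∩ S))
    (hS0 : μH[(finrank ℝ E : ℝ) - 1] S = 0) : IsPathConnected (U \ S) := by
  rcases le_or_gt (finrank ℝ E) 1 with hd | hd
  · have : (finrank ℝ E : ℝ) ≤ 1 := by exact_mod_cast hd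
    rw [eq_empty_of_hausdorffMeasure_eq_zero_of_nonpos (by linarith) hS0, sdiff_empty]
    exact hU.isConnected_iff_isPathConnected.1 hUc
  have hSnull : μH[(finrank ℝ E : ℝ)] S = 0 :=
    nonpos_iff_eq_zero.1 (hS0 ▸ Measure.hausdorffMeasure_mono (by linarith) S)
  have hdense : Dense Sᶜ :=
    interior_eq_empty_iff_dense_compl.1 (Measure.interior_eq_empty_of_null hSnull)
  refine hUc.isPathConnected_of_locally_joinedIn sdiff_subset
    (hdense.open_subset_closure_inter hU) fun x hx => ?_
  obtain ⟨r, hr, hrU⟩ := Metric.isOpen_iff.1 hU x hx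
  have hsub : closedBall x (r / 2) ⊆ U := (closedBall_subset_ball (half_lt_self hr)).trans hrU
  refine ⟨ball x (r / 2), ball_mem_nhds x (half_pos hr), fun a ha b hb => ?_⟩
  have hSB := isClosed_inter_of_isClosed_preimage_val hS isClosed_closedBall hsub
  exact (joinedIn_ball_diff hd hSB hS0 ⟨ha.1, ha.2.2⟩ ⟨hb.1, hb.2.2⟩).mono
    (sdiff_subset_sdiff_left (ball_subset_closedBall.trans hsub))

end NormedSpace

theorem stmt2_general (n : ℕ) (U S : Set (EuclideanSpace ℝ (Fin n)))
    (hU : IsOpen U) (hUconn : IsConnected U)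
    (hSclosed : IsClosed {x : U | (x : EuclideanSpace ℝ (Fin n)) ∈ S})
    (hS : μH[(n : ℝ) - 1] S = 0) :
    IsPathConnected (U \ S) :=
  hUconn.isPathConnected_diff_of_hausdorffMeasure_eq_zero hU hSclosed
    (by rwa [finrank_euclideanSpace_fin])

/-- If `U ⊆ ℝⁿ` is open and connected and `S ⊆ U` is relatively closed in `U`
with vanishing (n−1)-dimensional Hausdorff measure, then `U \ S` is path connected. -/
theorem stmt2 (n : ℕ) (U S : Set (EuclideanSpace ℝ (Fin n)))
    (hU : IsOpen U) (hUconn : IsConnected U) (hSU : S ⊆ U)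
    (hSclosed : IsClosed {x : U | (x : EuclideanSpace ℝ (Fin n)) ∈ S})
    (hS : μH[(n : ℝ) - 1] S = 0) :
    IsPathConnected (U \ S) :=
  stmt2_general n U S hU hUconn hSclosed hS
end

section
/- Let x₁ ≠ x₂ be points in ℝⁿ, r > 0 with B_r(x₁) and B_r(x₂) disjoint, and suppose S ⊆ ℝⁿ is a set such that every line segment parallel to x₁ − x₂ joining a point of the hyperplane through x₁ orthogonal to x₁ − x₂ intersected with B_r(x₁) to its translate in the hyperplane through x₂ meets S. Then H^{n−1}(S) ≥ c(n)·r^{n−1} > 0, where c(n) is the constant such that the (n−1)-dimensional measure of the (n−1)-ball of radius r equals c(n) r^{n−1}. -/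
open MeasureTheory Metric Submodule NNReal ENNReal

/-- If every segment parallel to `x₂ - x₁` joining a point of the hyperplane
through `x₁` orthogonal to `x₂ - x₁` (intersected with `B_r(x₁)`) to its translate meets
`S`, then `H^{n-1}(S)` is at least the `(n-1)`-measure of the hyperplane slice
`H₁ ∩ B_r(x₁)` (which equals `c(n) rⁿ⁻¹`), and in particular it is positive. -/
theorem stmt4 (n : ℕ) (hn : 1 ≤ n) (x₁ x₂ : EuclideanSpace ℝ (Fin n)) (hx : x₁ ≠ x₂)
    (r : ℝ) (hr : 0 < r) (hdisj : Disjoint (ball x₁ r) (ball x₂ r))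
    (S : Set (EuclideanSpace ℝ (Fin n)))
    (hseg : ∀ x ∈ {y : EuclideanSpace ℝ (Fin n) |
        (inner ℝ (y - x₁) (x₂ - x₁) : ℝ) = 0} ∩ ball x₁ r,
      (segment ℝ x (x + (x₂ - x₁)) ∩ S).Nonempty) :
    μH[(n : ℝ) - 1] ({y : EuclideanSpace ℝ (Fin n) |
        (inner ℝ (y - x₁) (x₂ - x₁) : ℝ) = 0} ∩ ball x₁ r) ≤ μH[(n : ℝ) - 1] S ∧
      0 < μH[(n : ℝ) - 1] ({y : EuclideanSpace ℝ (Fin n) |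
        (inner ℝ (y - x₁) (x₂ - x₁) : ℝ) = 0} ∩ ball x₁ r) := by
  classical
  set v : EuclideanSpace ℝ (Fin n) := x₂ - x₁ with hv_def
  have hv : v ≠ 0 := sub_ne_zero.mpr (Ne.symm hx)
  set K : Submodule ℝ (EuclideanSpace ℝ (Fin n)) := (ℝ ∙ v)ᗮ with hK
  set A : Set (EuclideanSpace ℝ (Fin n)) :=
    {y : EuclideanSpace ℝ (Fin n) | (inner ℝ (y - x₁) (x₂ - x₁) : ℝ) = 0} ∩ ball x₁ r with hA
  have hd0 : (0:ℝ) ≤ (n : ℝ) - 1 := by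
    have : (1:ℝ) ≤ (n:ℝ) := by exact_mod_cast hn
    linarith
  have hmemK : ∀ y : EuclideanSpace ℝ (Fin n), y ∈ A ↔ y - x₁ ∈ K ∧ y ∈ ball x₁ r := by
    intro y
    rw [hA, hK, Set.mem_inter_iff, Submodule.mem_orthogonal_singleton_iff_inner_left]
    exact Iff.rfl
  -- Part 1: the projection map
  set f : EuclideanSpace ℝ (Fin n) → EuclideanSpace ℝ (Fin n) :=
    fun y => x₁ + (orthogonalProjection K (y - x₁) : EuclideanSpace ℝ (Fin n)) with hfdef
  have hf : LipschitzWith 1 f := by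
    apply LipschitzWith.of_dist_le_mul
    intro a b
    have hfs : f a - f b = (orthogonalProjection K (a - b) : EuclideanSpace ℝ (Fin n)) := by
      simp only [hfdef]
      rw [add_sub_add_left_eq_sub, ← Submodule.coe_sub, ← map_sub]
      congr 2
      abel
    rw [dist_eq_norm, hfs, dist_eq_norm, NNReal.coe_one, one_mul]
    calc ‖(orthogonalProjection K (a - b) : EuclideanSpace ℝ (Fin n))‖
        = ‖orthogonalProjection K (a - b)‖ := Submodule.norm_coe _
      _ ≤ ‖orthogonalProjection K‖ * ‖a - b‖ := (orthogonalProjection K).le_opNorm _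
      _ ≤ 1 * ‖a - b‖ :=
          mul_le_mul_of_nonneg_right (orthogonalProjection_norm_le K) (norm_nonneg _)
      _ = ‖a - b‖ := one_mul _
  have hprojv : (orthogonalProjection K v : EuclideanSpace ℝ (Fin n)) = 0 := by
    have hvK : v ∈ Kᗮ := (ℝ ∙ v).le_orthogonal_orthogonal (Submodule.mem_span_singleton_self v)
    rw [Submodule.orthogonalProjectionOnto_apply_of_mem_orthogonal hvK]
    simp
  have hsub : A ⊆ f '' S := by
    intro x hxA
    obtain ⟨s, hs_seg, hsS⟩ := hseg x hxA
    refine ⟨s, hsS, ?_⟩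
    obtain ⟨a, c, ha, hc, hac, rfl⟩ := hs_seg
    have hx' : x - x₁ ∈ K := ((hmemK x).mp hxA).1
    have hrw : a • x + c • (x + v) - x₁ = (x - x₁) + c • v := by
      have ha' : a = 1 - c := by linarith
      subst ha'
      module
    show x₁ + (orthogonalProjection K (a • x + c • (x + v) - x₁) : EuclideanSpace ℝ (Fin n)) = x
    rw [hrw, map_add, ContinuousLinearMap.map_smul, Submodule.coe_add, Submodule.coe_smul,
      ← Submodule.starProjection_apply, Submodule.starProjection_eq_self_iff.mpr hx', hprojv, smul_zero, add_zero,
      add_sub_cancel]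
  have part1 : μH[(n : ℝ) - 1] A ≤ μH[(n : ℝ) - 1] S := by
    calc μH[(n : ℝ) - 1] A ≤ μH[(n : ℝ) - 1] (f '' S) := measure_mono hsub
      _ ≤ μH[(n : ℝ) - 1] S := by
          simpa using hf.hausdorffMeasure_image_le hd0 S
  -- Part 2: positivity
  set m : ℕ := n - 1 with hm
  have hfinrank : Module.finrank ℝ K = m := by
    have h2 : Module.finrank ℝ (ℝ ∙ v) + Module.finrank ℝ K = n := by
      rw [hK]
      simpa [finrank_euclideanSpace_fin] using
        Submodule.finrank_add_finrank_orthogonal (K := (ℝ ∙ v))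
    rw [finrank_span_singleton hv] at h2
    omega
  let b : OrthonormalBasis (Fin m) ℝ K := (stdOrthonormalBasis ℝ K).reindex (finCongr hfinrank)
  have hbnorm : ∀ i, ‖(b i : EuclideanSpace ℝ (Fin n))‖ = 1 := fun i => by
    have h := b.orthonormal.1 i
    rw [Submodule.norm_coe]
    exact h
  set g : EuclideanSpace ℝ (Fin n) → (Fin m → ℝ) :=
    fun y i => (inner ℝ (y - x₁) ((b i : EuclideanSpace ℝ (Fin n))) : ℝ) with hgdef
  have hg : LipschitzWith 1 g := by
    apply LipschitzWith.of_dist_le_mul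
    intro y y'
    rw [NNReal.coe_one, one_mul]
    refine (dist_pi_le_iff dist_nonneg).mpr fun i => ?_
    have hgs : g y i - g y' i = (inner ℝ (y - y') ((b i : EuclideanSpace ℝ (Fin n))) : ℝ) := by
      simp only [hgdef]
      rw [← inner_sub_left]
      congr 1
      abel
    rw [Real.dist_eq, hgs]
    calc |(inner ℝ (y - y') ((b i : EuclideanSpace ℝ (Fin n))) : ℝ)|
        ≤ ‖y - y'‖ * ‖(b i : EuclideanSpace ℝ (Fin n))‖ := abs_real_inner_le_norm _ _
      _ = dist y y' := by rw [hbnorm, mul_one, dist_eq_norm]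
  set ε : ℝ := r / (m + 1) with hε
  have hεpos : 0 < ε := by positivity
  have hball : ball (0 : Fin m → ℝ) ε ⊆ g '' A := by
    intro w hw
    set u : K := ∑ i, w i • b i with hu
    have hwnorm : ‖w‖ < ε := mem_ball_zero_iff.mp hw
    have hwi : ∀ i, |w i| ≤ ε := by
      intro i
      have h := dist_le_pi_dist w 0 i
      rw [Real.dist_eq, Pi.zero_apply, sub_zero, dist_zero_right] at h
      exact h.trans hwnorm.le
    have hunorm : ‖(u : EuclideanSpace ℝ (Fin n))‖ < r := by
      have h1 : ‖(u : EuclideanSpace ℝ (Fin n))‖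
          ≤ ∑ i, ‖w i • (b i : EuclideanSpace ℝ (Fin n))‖ := by
        rw [hu]
        push_cast
        exact norm_sum_le _ _
      have h3 : (∑ i : Fin m, ‖w i • (b i : EuclideanSpace ℝ (Fin n))‖) ≤ m * ε := by
        calc (∑ i : Fin m, ‖w i • (b i : EuclideanSpace ℝ (Fin n))‖)
            ≤ ∑ _i : Fin m, ε := Finset.sum_le_sum fun i _ => by
              rw [norm_smul, hbnorm, mul_one]; exact hwi i
          _ = m * ε := by simp [mul_comm]
      have h4 : (m : ℝ) * ε < r := by
        rw [hε]
        have hlt : (m : ℝ) / (m + 1) < 1 := by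
          rw [div_lt_one (by positivity)]
          linarith
        calc (m : ℝ) * (r / (m+1)) = ((m : ℝ)/(m+1)) * r := by ring
          _ < 1 * r := mul_lt_mul_of_pos_right hlt hr
          _ = r := one_mul r
      linarith
    refine ⟨x₁ + (u : EuclideanSpace ℝ (Fin n)), ?_, ?_⟩
    · rw [hmemK]
      refine ⟨by simpa using u.2, ?_⟩
      rw [mem_ball, dist_eq_norm]
      simpa using hunorm
    · funext i
      show (inner ℝ (x₁ + (u : EuclideanSpace ℝ (Fin n)) - x₁)
        ((b i : EuclideanSpace ℝ (Fin n))) : ℝ) = w i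
      rw [add_sub_cancel_left, real_inner_comm, ← Submodule.coe_inner, hu]
      exact b.orthonormal.inner_right_fintype w i
  have hcast : ((n : ℝ) - 1) = (m : ℝ) := by
    rw [hm]
    push_cast [Nat.cast_sub hn]
    ring
  have hpi : μH[(n : ℝ) - 1] (ball (0 : Fin m → ℝ) ε) = volume (ball (0 : Fin m → ℝ) ε) := by
    rw [hcast]
    have h := hausdorffMeasure_pi_real (ι := Fin m)
    rw [Fintype.card_fin] at h
    rw [h]
  have part2 : 0 < μH[(n : ℝ) - 1] A := by
    have h1 : 0 < volume (ball (0 : Fin m → ℝ) ε) := measure_ball_pos _ _ hεpos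
    have h3 : μH[(n : ℝ) - 1] (g '' A) ≤ μH[(n : ℝ) - 1] A := by
      simpa using hg.hausdorffMeasure_image_le hd0 A
    calc (0 : ℝ≥0∞) < volume (ball (0 : Fin m → ℝ) ε) := h1
      _ = μH[(n : ℝ) - 1] (ball (0 : Fin m → ℝ) ε) := hpi.symm
      _ ≤ μH[(n : ℝ) - 1] (g '' A) := measure_mono hball
      _ ≤ μH[(n : ℝ) - 1] A := h3
  exact ⟨part1, part2⟩
end
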